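/- For every affine hyperplane H of F_5^n not containing the origin, the set H ∪ (-H) is sum-free and has cardinality 2·5^(n-1). -/

import Mathlib

open Pointwise

/-! Writing `H = φ⁻¹' {c}`, we get `H ∪ -H = φ⁻¹' {c, -c}`. Since `φ` is additive, this set is
sum-free because `{c, -c}` is sum-free in `ZMod 5` (the sums of two of its elements are `2c`, `0`
and `-2c`). The preimage of a set `t` under the surjective map `φ` is in bijection with
`ker φ × t`; taking `t = ZMod 5` shows `|ker φ| = 5 ^ (n - 1)`, and `t = {c, -c}` has two elements
since `c ≠ -c`. -/

def IsSumFree {G : Type*} [Add G] (A : Set G) : Prop :=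
  ∀ x ∈ A, ∀ y ∈ A, x + y ∉ A

theorem IsSumFree.preimage {G G' F : Type*} [Add G] [Add G'] [FunLike F G G']
    [AddHomClass F G G'] (f : F) {A : Set G'} (hA : IsSumFree A) : IsSumFree (f ⁻¹' A) :=
  fun x hx y hy hxy => hA _ hx _ hy (map_add f x y ▸ hxy)

theorem ZMod.isSumFree_pair_neg {c : ZMod 5} (hc : c ≠ 0) :
    IsSumFree ({c, -c} : Set (ZMod 5)) := by
  simp only [IsSumFree, Set.mem_insert_iff, Set.mem_singleton_iff]
  revert c; decide

theorem ZMod.self_ne_neg {c : ZMod 5} (hc : c ≠ 0) : c ≠ -c := by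
  revert c; decide

theorem Set.preimage_neg_of_map_neg {G G' F : Type*} [AddGroup G] [SubtractionMonoid G']
    [FunLike F G G'] [AddMonoidHomClass F G G'] (f : F) (t : Set G') :
    f ⁻¹' (-t) = -(f ⁻¹' t) := by
  ext x; simp

theorem AddMonoidHom.card_preimage_of_surjective {G G' : Type*} [AddGroup G] [AddGroup G']
    (f : G →+ G') (hf : Function.Surjective f) (t : Set G') :
    Nat.card (f ⁻¹' t) = Nat.card f.ker * Nat.card t := by
  let e := QuotientAddGroup.quotientKerEquivOfSurjective f hf
  have hfe : f ⁻¹' t = QuotientAddGroup.mk ⁻¹' (e ⁻¹' t) := rfl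
  rw [hfe, Nat.card_congr (QuotientAddGroup.preimageMkEquivAddSubgroupProdSet _ _), Nat.card_prod,
    Nat.card_preimage_of_injective e.injective (by simp [e.surjective.range_eq])]

theorem LinearMap.card_ker_of_surjective {K : Type*} [Ring K] [Nontrivial K] [Finite K] {n : ℕ}
    (φ : (Fin n → K) →ₗ[K] K) (hφ : Function.Surjective φ) :
    Nat.card (LinearMap.ker φ) = Nat.card K ^ (n - 1) := by
  have h := φ.toAddMonoidHom.card_preimage_of_surjective hφ Set.univ
  rw [Set.preimage_univ, Nat.card_univ, Nat.card_univ, Nat.card_fun, Nat.card_fin] at h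
  have hK : 1 < Nat.card K := Finite.one_lt_card
  cases n with
  | zero =>
    rw [pow_zero] at h
    exact absurd (Nat.eq_one_of_mul_eq_one_left h.symm) hK.ne'
  | succ n =>
    rw [pow_succ] at h
    exact (Nat.eq_of_mul_eq_mul_right (by omega) h).symm

theorem stmt_3 (n : ℕ) (φ : (Fin n → ZMod 5) →ₗ[ZMod 5] ZMod 5)
    (hφ : Function.Surjective φ) (c : ZMod 5) (hc : c ≠ 0)
    (H : Set (Fin n → ZMod 5)) (hH : H = {x | φ x = c}) :
    (∀ x ∈ H ∪ -H, ∀ y ∈ H ∪ -H, x + y ∉ H ∪ -H) ∧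
      (H ∪ -H).ncard = 2 * 5 ^ (n - 1) := by
  have hunion : H ∪ -H = φ ⁻¹' {c, -c} := by
    rw [← Set.singleton_union, ← Set.neg_singleton, Set.preimage_union,
      Set.preimage_neg_of_map_neg, hH]
    rfl
  have : Fact (1 < 5) := ⟨by norm_num⟩
  have hker : Nat.card φ.toAddMonoidHom.ker = 5 ^ (n - 1) := by
    simpa using φ.card_ker_of_surjective hφ
  rw [hunion]
  refine ⟨(ZMod.isSumFree_pair_neg hc).preimage φ, ?_⟩
  rw [← Nat.card_coe_set_eq, ← φ.toAddMonoidHom_coe,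
    φ.toAddMonoidHom.card_preimage_of_surjective hφ, hker, Nat.card_coe_set_eq,
    Set.ncard_pair (ZMod.self_ne_neg hc), mul_comm]
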